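/- Let μ be a monomial in distinct variables of colors i_1,…,i_n ∈ I with exponents −k_1,…,−k_n, and fix integers M, m. For each ordering (permutation) of the variables of μ, form the associated word [i_{σ(1)}^{(d_1)}⋯i_{σ(n)}^{(d_n)}], where the exponents are computed in the chosen order by d_a := k_{σ(a)} + Σ_{t>a} #_{i_{σ(a)}→i_{σ(t)}} − Σ_{s<a} #_{i_{σ(s)}→i_{σ(a)}}. Then the system of inequalities Σ_{s∈A} d_s ≥ −M|A| + m|A|² − Σ_{s∈A, t∉A, s>t} #_{i_s i_t} (for all subsets A ⊆ {1,…,n}, with colors read in the chosen order) holds for the associated word of one ordering of μ if and only if it holds for the associated word of every ordering of μ. -/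

import Mathlib

noncomputable section
set_option linter.unusedSectionVars false
set_option maxHeartbeats 1000000
open scoped BigOperators
open DirectSum

namespace QShuffle

/-! ## Base field 𝔽 = ℚ(q, (t_e)_{e ∈ E}) -/

abbrev FF (E : Type) : Type := FractionRing (MvPolynomial (Option E) ℚ)

def qq (E : Type) : FF E := algebraMap (MvPolynomial (Option E) ℚ) (FF E) (MvPolynomial.X none)

def tt {E : Type} (e : E) : FF E := algebraMap (MvPolynomial (Option E) ℚ) (FF E) (MvPolynomial.X (some e))

variable {I E : Type} [Fintype I] [Fintype E] [DecidableEq I] [DecidableEq E]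
variable {F : Type} [Field F]

/-! ## Quiver combinatorics -/

def edges (src tgt : E → I) (i j : I) : Finset E :=
  Finset.univ.filter fun e => src e = i ∧ tgt e = j

/-- `#_{i→j}` -/
def nE (src tgt : E → I) (i j : I) : ℕ := (edges src tgt i j).card

/-- `#_{ij} = #_{i→j} + #_{j→i}` -/
def nnE (src tgt : E → I) (i j : I) : ℕ := nE src tgt i j + nE src tgt j i

/-- Kronecker delta -/
def dl (i j : I) : ℕ := if i = j then 1 else 0

/-- The double `Ē = E ⊔ E*`. -/
abbrev DEdge (E : Type) : Type := E ⊕ E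

def dsrc (src tgt : E → I) : DEdge E → I := Sum.elim src tgt
def dtgt (src tgt : E → I) : DEdge E → I := Sum.elim tgt src
/-- `t_e` for `e ∈ Ē`, with `t_{e*} = q/t_e`. -/
def dt (q : F) (t : E → F) : DEdge E → F := Sum.elim t fun e => q * (t e)⁻¹

open LaurentPolynomial in
/-- `ζ̃_{ij}(x) = (1-xq⁻¹)^{δ_{ij}} ∏_{e:i→j}(t_e⁻¹ - x) ∏_{e:j→i}(1 - t_e q⁻¹ x⁻¹)`. -/
def zetaT (src tgt : E → I) (q : F) (t : E → F) (i j : I) : LaurentPolynomial F :=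
  (if i = j then 1 - C q⁻¹ * T 1 else 1)
    * ∏ e ∈ edges src tgt i j, (C (t e)⁻¹ - T 1)
    * ∏ e ∈ edges src tgt j i, (1 - C (t e * q⁻¹) * T (-1))

/-! ## The quadratic quantum loop group Ũ⁺ -/

def gen (F : Type) [Field F] (I : Type) (i : I) (d : ℤ) : FreeAlgebra F (I × ℤ) :=
  FreeAlgebra.ι F (i, d)

/-- coefficient of `z^{-a} w^{-b}` in `e_i(z) e_j(w) ζ̃_{ji}(w/z) z^{δ_{ij}}` -/
def quadLHS (src tgt : E → I) (q : F) (t : E → F) (i j : I) (a b : ℤ) : FreeAlgebra F (I × ℤ) :=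
  Finsupp.sum (zetaT src tgt q t j i).coeff fun m c =>
    c • (gen F I i (a + (dl i j : ℤ) - m) * gen F I j (b + m))

/-- coefficient of `z^{-a} w^{-b}` in `e_j(w) e_i(z) ζ̃_{ij}(z/w) (-w)^{δ_{ij}}` -/
def quadRHS (src tgt : E → I) (q : F) (t : E → F) (i j : I) (a b : ℤ) : FreeAlgebra F (I × ℤ) :=
  ((-1 : F) ^ dl i j) •
    Finsupp.sum (zetaT src tgt q t i j).coeff fun m c =>
      c • (gen F I j (b + (dl i j : ℤ) - m) * gen F I i (a + m))

/-- The quadratic relations. -/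
inductive QuadRel (src tgt : E → I) (q : F) (t : E → F) :
    FreeAlgebra F (I × ℤ) → FreeAlgebra F (I × ℤ) → Prop
  | rel (i j : I) (a b : ℤ) :
      QuadRel src tgt q t (quadLHS src tgt q t i j a b) (quadRHS src tgt q t i j a b)

/-- The quadratic quantum loop group `Ũ⁺`. -/
abbrev Utilde (src tgt : E → I) (q : F) (t : E → F) : Type :=
  RingQuot (QuadRel src tgt q t)

/-- `e_{i,d} ∈ Ũ⁺` -/
def eU (src tgt : E → I) (q : F) (t : E → F) (i : I) (d : ℤ) : Utilde src tgt q t :=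
  RingQuot.mkAlgHom F (QuadRel src tgt q t) (gen F I i d)

/-! ## Words -/

abbrev Word (I : Type) : Type := List (I × ℤ)

/-- `e_w ∈ Ũ⁺` -/
def eW (src tgt : E → I) (q : F) (t : E → F) (w : Word I) : Utilde src tgt q t :=
  (w.map fun p => eU src tgt q t p.1 p.2).prod

/-- `e_w` in the free algebra -/
def eWFree (F : Type) [Field F] {I : Type} (w : Word I) : FreeAlgebra F (I × ℤ) :=
  (w.map fun p => gen F I p.1 p.2).prod

def colorCount (w : Word I) (i : I) : ℕ := (w.map Prod.fst).count i
def expSum (w : Word I) : ℤ := (w.map Prod.snd).sum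

/-- letter order: `i^{(d)} < j^{(e)}` iff `d > e` or (`d = e` and `i < j`) -/
def letterLT [LT I] (p r : I × ℤ) : Prop := r.2 < p.2 ∨ (p.2 = r.2 ∧ p.1 < r.1)

/-- lexicographic order on words -/
def wordLT [LT I] (w v : Word I) : Prop := List.Lex letterLT w v
def wordLE [LT I] (w v : Word I) : Prop := wordLT w v ∨ w = v

/-- A non-increasing word. -/
def NonInc (src tgt : E → I) [LinearOrder I] (w : Word I) : Prop :=
  ∀ a b : Fin w.length, a < b →
    (w.get a).2 < (w.get b).2 + ∑ s ∈ Finset.Ico a b, (nnE src tgt (w.get s).1 (w.get b).1 : ℤ)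
    ∨ ((w.get a).2 = (w.get b).2 + ∑ s ∈ Finset.Ico a b, (nnE src tgt (w.get s).1 (w.get b).1 : ℤ)
        ∧ (w.get b).1 ≤ (w.get a).1)

/-! ## The big shuffle algebra: graded pieces -/

abbrev VarType {I : Type} (ν : I → ℕ) : Type := Σ i : I, Fin (ν i)

abbrev Laur (F : Type) [Field F] {I : Type} (ν : I → ℕ) : Type :=
  AddMonoidAlgebra F (VarType ν →₀ ℤ)

def rnm {ν : I → ℕ} (g : VarType ν ≃ VarType ν) (R : Laur F ν) : Laur F ν :=
  AddMonoidAlgebra.mapDomain (Finsupp.equivMapDomain g) R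

def ColorPres {ν : I → ℕ} (g : VarType ν ≃ VarType ν) : Prop := ∀ x : VarType ν, (g x).1 = x.1

def IsSym {ν : I → ℕ} (R : Laur F ν) : Prop :=
  ∀ g : VarType ν ≃ VarType ν, ColorPres g → rnm g R = R

def SymSub (F : Type) [Field F] {I : Type} (ν : I → ℕ) : Submodule F (Laur F ν) where
  carrier := {R | IsSym R}
  add_mem' := by
    intro R S hR hS g hg
    have h1 := hR g hg
    have h2 := hS g hg
    unfold rnm at *
    rw [AddMonoidAlgebra.mapDomain_add, h1, h2]
  zero_mem' := by
    intro g hg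
    simp [rnm]
  smul_mem' := by
    intro c R hR g hg
    have h1 := hR g hg
    unfold rnm at *
    conv_rhs => rw [← h1]
    ext
    simp [Finsupp.mapDomain_smul]

/-- The big shuffle algebra `𝒱` as a graded vector space. -/
abbrev VV (F : Type) [Field F] (I : Type) [Fintype I] [DecidableEq I] : Type :=
  ⨁ ν : I → ℕ, SymSub F ν

def inclV {F : Type} [Field F] {I : Type} [Fintype I] [DecidableEq I] (ν : I → ℕ) :
    SymSub F (I := I) ν →ₗ[F] VV F I :=
  DirectSum.lof F (I → ℕ) (fun ν => SymSub F ν) ν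

def sgm (i : I) : I → ℕ := fun j => if j = i then 1 else 0

def oneVarM (F : Type) [Field F] {I : Type} [DecidableEq I] (i : I) (d : ℤ) :
    Laur F (sgm i) :=
  AddMonoidAlgebra.single (Finsupp.single ⟨i, ⟨0, by simp [sgm]⟩⟩ d) 1

lemma varSubsingleton {i : I} (x y : VarType (sgm i)) : x = y := by
  obtain ⟨a, fa⟩ := x
  obtain ⟨b, fb⟩ := y
  have ha : a = i := by
    by_contra h
    have h0 : sgm i a = 0 := by simp [sgm, h]
    have := fa.isLt
    omega
  have hb : b = i := by
    by_contra h
    have h0 : sgm i b = 0 := by simp [sgm, h]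
    have := fb.isLt
    omega
  subst ha
  subst hb
  have h1 : sgm b b = 1 := by simp [sgm]
  have hfa := fa.isLt
  have hfb := fb.isLt
  congr 1
  exact Fin.ext (by omega)

lemma oneVarM_sym (i : I) (d : ℤ) : IsSym (oneVarM F i d) := by
  intro g hg
  have hgid : g = Equiv.refl _ := Equiv.ext fun x => varSubsingleton _ _
  subst hgid
  unfold rnm
  have hid : (Finsupp.equivMapDomain (Equiv.refl (VarType (sgm i))) :
      (VarType (sgm i) →₀ ℤ) → (VarType (sgm i) →₀ ℤ)) = id :=
    funext fun l => Finsupp.equivMapDomain_refl l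
  rw [hid]
  ext
  simp [Finsupp.mapDomain_id]

/-- `z_{i1}^d` -/
def oneVar (F : Type) [Field F] {I : Type} [Fintype I] [DecidableEq I] (i : I) (d : ℤ) :
    SymSub F (sgm i) :=
  ⟨oneVarM F i d, oneVarM_sym i d⟩

lemma one_sym {ν : I → ℕ} : IsSym (AddMonoidAlgebra.single (0 : VarType ν →₀ ℤ) (1 : F)) := by
  intro g hg
  unfold rnm
  rw [AddMonoidAlgebra.mapDomain_single]
  simp

instance {ν : I → ℕ} : DecidablePred (fun g : VarType ν ≃ VarType ν => ColorPres g) := fun g =>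
  decidable_of_iff (∀ x : VarType ν, (g x).1 = x.1) Iff.rfl

/-! ## Specialization and wheel conditions -/

def specialize {ν : I → ℕ} (ρ : VarType ν → VarType ν) (sc : VarType ν → F) (R : Laur F ν) :
    Laur F ν :=
  Finsupp.sum R.coeff fun m a =>
    AddMonoidAlgebra.single (Finsupp.mapDomain ρ m) (a * ∏ v ∈ m.support, sc v ^ (m v))

/-- The 3-variable wheel conditions. -/
def WheelCond (src tgt : E → I) (q : F) (t : E → F) {ν : I → ℕ} (R : Laur F ν) : Prop :=
  ∀ (eb : DEdge E) (va vb vc : VarType ν),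
    va.1 = dsrc src tgt eb → vb.1 = dtgt src tgt eb → vc.1 = dsrc src tgt eb →
    va ≠ vc → vb ≠ va → vb ≠ vc →
    specialize
      (fun v => if v = va then vc else if v = vb then vc else v)
      (fun v => if v = va then q else if v = vb then dt q t eb else 1) R = 0

/-! ## The shuffle product, characterized by a polynomial identity -/

/-- the variable `z_v` as a Laurent polynomial -/
def XV {ν : I → ℕ} (v : VarType ν) : Laur F ν :=
  AddMonoidAlgebra.single (Finsupp.single v 1) 1

/-- substitute the monomial with exponent vector `u` into a one-variable Laurent polynomial -/
def compL {ν : I → ℕ} (l : LaurentPolynomial F) (u : VarType ν →₀ ℤ) : Laur F ν :=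
  Finsupp.sum l.coeff fun m a => AddMonoidAlgebra.single (m • u) a

/-- the exponent vector of `z_x / z_y` -/
def ratio {ν : I → ℕ} (x y : VarType ν) : VarType ν →₀ ℤ :=
  Finsupp.single x 1 - Finsupp.single y 1

/-- `∏_{(u,v) distinct, same color} (z_u - z_v)`, a symmetric Laurent polynomial used to clear
the denominators in the symmetrized shuffle product. -/
def Dsym (F : Type) [Field F] {I : Type} [Fintype I] [DecidableEq I] (ν : I → ℕ) : Laur F ν :=
  ∏ p ∈ (Finset.univ : Finset (VarType ν × VarType ν)).filter
      (fun p => p.1 ≠ p.2 ∧ p.1.1 = p.2.1),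
    (XV p.1 - XV p.2)

def incl1 (ν ν' : I → ℕ) (x : VarType ν) : VarType (ν + ν') :=
  ⟨x.1, Fin.castAdd (ν' x.1) x.2⟩

def incl2 (ν ν' : I → ℕ) (y : VarType ν') : VarType (ν + ν') :=
  ⟨y.1, Fin.natAdd (ν y.1) y.2⟩

def embed1 (ν ν' : I → ℕ) (R : Laur F ν) : Laur F (ν + ν') :=
  AddMonoidAlgebra.mapDomain (fun m => Finsupp.mapDomain (incl1 ν ν') m) R

def embed2 (ν ν' : I → ℕ) (R : Laur F ν') : Laur F (ν + ν') :=
  AddMonoidAlgebra.mapDomain (fun m => Finsupp.mapDomain (incl2 ν ν') m) R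

/-- `Dsym · ∏_{x ∈ vars(ν), y ∈ vars(ν')} ζ_{color x, color y}(z_x / z_y)`, with all
denominators cancelled: the kernel of the shuffle product after clearing denominators. -/
def Kpoly (src tgt : E → I) (q : F) (t : E → F) (ν ν' : I → ℕ) : Laur F (ν + ν') :=
  (∏ p ∈ (Finset.univ : Finset (VarType ν × VarType ν')),
    (compL (zetaT src tgt q t p.1.1 p.2.1) (ratio (incl1 ν ν' p.1) (incl2 ν ν' p.2))
      * (if p.1.1 = p.2.1 then
          (XV (incl1 ν ν' p.1) - XV (incl2 ν ν' p.2)) * XV (incl2 ν ν' p.2) else 1)))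
  * (∏ p ∈ (Finset.univ : Finset (VarType ν × VarType ν)).filter
        (fun p => p.1 ≠ p.2 ∧ p.1.1 = p.2.1),
      (XV (incl1 ν ν' p.1) - XV (incl1 ν ν' p.2)))
  * (∏ p ∈ (Finset.univ : Finset (VarType ν' × VarType ν')).filter
        (fun p => p.1 ≠ p.2 ∧ p.1.1 = p.2.1),
      (XV (incl2 ν ν' p.1) - XV (incl2 ν ν' p.2)))

/-- The defining identity of the shuffle product `R * R' = P`, with denominators cleared:
`∏_i ν_i! ν'_i! • (Dsym · P) = ∑_{color-preserving g} g ( R ⊗ R' · Kpoly )`. -/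
def ShuffleEq (src tgt : E → I) (q : F) (t : E → F) {ν ν' : I → ℕ}
    (R : Laur F ν) (R' : Laur F ν') (P : Laur F (ν + ν')) : Prop :=
  ((∏ i : I, Nat.factorial (ν i) * Nat.factorial (ν' i) : ℕ) : F) • (Dsym F (ν + ν') * P) =
    ∑ g : {g : Equiv.Perm (VarType (ν + ν')) // ColorPres g},
      rnm g.val (embed1 ν ν' R * embed2 ν ν' R' * Kpoly src tgt q t ν ν')

/-- `(V, ι)` is a model of the big shuffle algebra `𝒱`: an `F`-algebra whose product is
the shuffle product. -/
def IsShuffleAlgebra (src tgt : E → I) (q : F) (t : E → F) (V : Type) [Ring V] [Algebra F V]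
    (ι : VV F I ≃ₗ[F] V) : Prop :=
  (ι (inclV 0 ⟨AddMonoidAlgebra.single 0 1, one_sym⟩) = 1) ∧
  ∀ (ν ν' : I → ℕ) (R : SymSub F ν) (R' : SymSub F ν') (P : SymSub F (ν + ν')),
    ShuffleEq src tgt q t R.val R'.val P.val →
    ι (inclV ν R) * ι (inclV ν' R') = ι (inclV (ν + ν') P)

end QShuffle

namespace QShuffle

variable {I E : Type} [Fintype I] [Fintype E] [DecidableEq I] [DecidableEq E]
variable {F : Type} [Field F]

/-! ## The pairing, via expansion in a Hahn series field

The "expansion in the region `|z_1| ≫ ⋯ ≫ |z_n|`" of a rational function is encoded by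
working inside the field of Hahn series over the lexicographic group `Lex (Fin n →₀ ℤ)`
(a Laurent monomial `∏ z_a^{v_a}` is placed in degree `toLex (-v)`, so that each ratio
`z_b/z_a` with `a < b` has positive order, and taking inverses in this field implements
exactly the geometric series expansions in these ratios). -/

abbrev HF (F : Type) [Field F] (n : ℕ) : Type := HahnSeries (Lex (Fin n →₀ ℤ)) F

/-- the monomial `z_1^{v 1} ⋯ z_n^{v n}` in the Hahn field -/
def monoH {n : ℕ} (v : Fin n → ℤ) : HF F n :=
  HahnSeries.single (toLex (Finsupp.equivFunOnFinite.symm fun a => - v a)) (1 : F)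

/-- a Laurent polynomial in the Hahn field -/
def embedH {n : ℕ} (S : AddMonoidAlgebra F (Fin n →₀ ℤ)) : HF F n :=
  Finsupp.sum S.coeff fun m a => HahnSeries.single (toLex (-m)) a

/-- the Hahn degree of the ratio `z_b/z_a` -/
def rexp {n : ℕ} (a b : Fin n) : Fin n →₀ ℤ :=
  Finsupp.single a 1 - Finsupp.single b 1

/-- the expansion of `ζ_{c_b, c_a}(z_b/z_a)` in the Hahn field (for `a < b`) -/
def zetaH (src tgt : E → I) (q : F) (t : E → F) {n : ℕ} (c : Fin n → I) (a b : Fin n) :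
    HF F n :=
  (Finsupp.sum (zetaT src tgt q t (c b) (c a)).coeff fun m x =>
      HahnSeries.single (toLex (m • rexp a b)) x)
    * ((1 - HahnSeries.single (toLex (rexp a b)) (1 : F))⁻¹) ^ dl (c b) (c a)

/-- `⟨e_{c_1,d_1} ⋯ e_{c_n,d_n}, S⟩` for a Laurent polynomial `S` in the variables
`z_1, …, z_n`: the constant term of `z^d · S · ∏_{a<b} ζ_{c_b c_a}(z_b/z_a)⁻¹`,
expanded in the region `|z_1| ≫ ⋯ ≫ |z_n|`. -/
def pairCore (src tgt : E → I) (q : F) (t : E → F) {n : ℕ} (c : Fin n → I) (d : Fin n → ℤ)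
    (S : AddMonoidAlgebra F (Fin n →₀ ℤ)) : F :=
  (embedH S * monoH d *
      ∏ p ∈ (Finset.univ : Finset (Fin n × Fin n)).filter (fun p : Fin n × Fin n => p.1 < p.2),
        (zetaH src tgt q t c p.1 p.2)⁻¹).coeff 0

/-- substitution `z_a ↦ z_{β a}` at the level of exponents -/
def pullback {ν : I → ℕ} (n : ℕ) (β : Fin n ≃ VarType ν) (R : Laur F ν) :
    AddMonoidAlgebra F (Fin n →₀ ℤ) :=
  AddMonoidAlgebra.mapDomain (fun m : VarType ν →₀ ℤ => Finsupp.equivMapDomain β.symm m) R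

/-- The pairing `⟨e_w , R⟩` of a word with a symmetric Laurent polynomial (`0` if the
degrees do not match; the choice of the color-compatible bijection `β` is immaterial
when `R` is symmetric). -/
def pairWord (src tgt : E → I) (q : F) (t : E → F) (l : Word I) {ν : I → ℕ} (R : Laur F ν) :
    F :=
  if h : ∃ β : Fin l.length ≃ VarType ν, ∀ a, (β a).1 = (l.get a).1 then
    pairCore src tgt q t (fun a => (l.get a).1) (fun a => (l.get a).2)
      (pullback l.length h.choose R)
  else 0

/-- The pairing of an arbitrary element of the free algebra with `R`, extended linearly
from words. -/
def pairFree (src tgt : E → I) (q : F) (t : E → F) (x : FreeAlgebra F (I × ℤ)) {ν : I → ℕ}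
    (R : Laur F ν) : F :=
  Finsupp.sum
    ((FreeAlgebra.equivMonoidAlgebraFreeMonoid : FreeAlgebra F (I × ℤ) ≃ₐ[F]
        MonoidAlgebra F (FreeMonoid (I × ℤ))) x).coeff
    fun w cf => cf * pairWord src tgt q t (FreeMonoid.toList w) R

end QShuffle

namespace QShuffle

variable {I E : Type} [Fintype I] [Fintype E] [DecidableEq I] [DecidableEq E]
variable {F : Type} [Field F]

/-! ## The cubic elements `A^{(e)}_{a,b,c}`

We work with Laurent polynomials in the three variables `x₁ = z 0, x₂ = z 1, y = z 2`.
The rational prefactors appearing in `X^{(e)}` are Laurent polynomials after the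
cancellations indicated in the paper; we define them in cancelled form. -/

abbrev L3 (F : Type) [Field F] : Type := AddMonoidAlgebra F (Fin 3 →₀ ℤ)

/-- substitute the monomial with exponent vector `u` into a 1-variable Laurent polynomial -/
def comp3 (l : LaurentPolynomial F) (u : Fin 3 →₀ ℤ) : L3 F :=
  Finsupp.sum l.coeff fun m a => AddMonoidAlgebra.single (m • u) a

/-- exponent vector of `z_b / z_a` -/
def uru (a b : Fin 3) : Fin 3 →₀ ℤ := Finsupp.single b 1 - Finsupp.single a 1

open LaurentPolynomial in
/-- `ζ̃_{ij}(x)` without its `(1 - x q⁻¹)^{δ_{ij}}` factor, i.e.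
`ζ̃_{ii}(x)/(1 - x q⁻¹)` when `i = j`. -/
def zetaNoQ (src tgt : E → I) (q : F) (t : E → F) (i j : I) : LaurentPolynomial F :=
  (∏ e ∈ edges src tgt i j, (C (t e)⁻¹ - T 1))
    * ∏ e ∈ edges src tgt j i, (1 - C (t e * q⁻¹) * T (-1))

open LaurentPolynomial in
/-- For an edge `e : i → j` of `Ē`, the Laurent polynomial `ζ̃_{ji}(x) / (1 - x q / t_e)`
(the displayed factor cancels a linear factor of `ζ̃_{ji}`). -/
def cancelA (src tgt : E → I) (q : F) (t : E → F) : DEdge E → LaurentPolynomial F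
  | Sum.inl f =>
      (if tgt f = src f then 1 - C q⁻¹ * T 1 else 1)
        * (∏ e' ∈ edges src tgt (tgt f) (src f), (C (t e')⁻¹ - T 1))
        * (∏ e' ∈ (edges src tgt (src f) (tgt f)).erase f, (1 - C (t e' * q⁻¹) * T (-1)))
        * (C (- (t f) * q⁻¹) * T (-1))
  | Sum.inr f =>
      (if src f = tgt f then 1 - C q⁻¹ * T 1 else 1)
        * (∏ e' ∈ (edges src tgt (src f) (tgt f)).erase f, (C (t e')⁻¹ - T 1))
        * (∏ e' ∈ edges src tgt (tgt f) (src f), (1 - C (t e' * q⁻¹) * T (-1)))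
        * C (t f)⁻¹

open LaurentPolynomial in
/-- For an edge `e : i → j` of `Ē`, the Laurent polynomial `ζ̃_{ij}(x) / (1 - x t_e)`. -/
def cancelB (src tgt : E → I) (q : F) (t : E → F) : DEdge E → LaurentPolynomial F
  | Sum.inl f =>
      (if src f = tgt f then 1 - C q⁻¹ * T 1 else 1)
        * (∏ e' ∈ (edges src tgt (src f) (tgt f)).erase f, (C (t e')⁻¹ - T 1))
        * (∏ e' ∈ edges src tgt (tgt f) (src f), (1 - C (t e' * q⁻¹) * T (-1)))
        * C (t f)⁻¹
  | Sum.inr f =>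
      (if tgt f = src f then 1 - C q⁻¹ * T 1 else 1)
        * (∏ e' ∈ edges src tgt (tgt f) (src f), (C (t e')⁻¹ - T 1))
        * (∏ e' ∈ (edges src tgt (src f) (tgt f)).erase f, (1 - C (t e' * q⁻¹) * T (-1)))
        * (C (- (t f) * q⁻¹) * T (-1))

/-- a Laurent monomial in `x₁, x₂, y` -/
def mono3 (a b c : ℤ) (cf : F) : L3 F :=
  AddMonoidAlgebra.single (Finsupp.equivFunOnFinite.symm ![a, b, c]) cf

variable (src tgt : E → I) (q : F) (t : E → F) in
/-- the Laurent-polynomial prefactor of `e_i(x₁)e_i(x₂)e_j(y)` in `X^{(e)}` -/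
def pref1 (e : DEdge E) : L3 F :=
  comp3 (zetaNoQ src tgt q t (dsrc src tgt e) (dsrc src tgt e)) (uru 0 1)
    * comp3 (zetaT src tgt q t (dtgt src tgt e) (dsrc src tgt e)) (uru 0 2)
    * comp3 (cancelA src tgt q t e) (uru 1 2)

variable (src tgt : E → I) (q : F) (t : E → F) in
/-- the Laurent-polynomial prefactor of `e_i(x₂)e_j(y)e_i(x₁)` in `X^{(e)}` -/
def pref2 (e : DEdge E) : L3 F :=
  comp3 (zetaT src tgt q t (dsrc src tgt e) (dsrc src tgt e)) (uru 1 0)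
    * comp3 (cancelA src tgt q t e) (uru 1 2)
    * comp3 (cancelB src tgt q t e) (uru 2 0)
    * mono3 0 1 (-1) (- dt q t e)
    * (mono3 (-1) 0 1 (-1 : F)) ^ dl (dsrc src tgt e) (dtgt src tgt e)

variable (src tgt : E → I) (q : F) (t : E → F) in
/-- the Laurent-polynomial prefactor of `e_j(y)e_i(x₁)e_i(x₂)` in `X^{(e)}` -/
def pref3 (e : DEdge E) : L3 F :=
  comp3 (zetaNoQ src tgt q t (dsrc src tgt e) (dsrc src tgt e)) (uru 0 1)
    * comp3 (cancelB src tgt q t e) (uru 2 0)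
    * comp3 (zetaT src tgt q t (dsrc src tgt e) (dtgt src tgt e)) (uru 2 1)
    * mono3 0 1 (-1) (dt q t e * q⁻¹)
    * (mono3 (-1) (-1) 2 (1 : F)) ^ dl (dsrc src tgt e) (dtgt src tgt e)

variable (q : F) (t : E → F) in
/-- the monomial shift `x₁^a (x₂/q)^b (y/t_e)^c` -/
def shift3 (e : DEdge E) (a b c : ℤ) : L3 F :=
  mono3 a b c (q ^ (-b) * (dt q t e) ^ (-c))

variable (src tgt : E → I) (q : F) (t : E → F) in
/-- The cubic element `A^{(e)}_{a,b,c}`, as an element of the free algebra: the constant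
term of `x₁^a (x₂/q)^b (y/t_e)^c / ((1-q)(1-t_e)^{δ_{ij}}(1-t_e/q)^{δ_{ij}}) ⬝ X^{(e)}`. -/
def Afree (e : DEdge E) (a b c : ℤ) : FreeAlgebra F (I × ℤ) :=
  ((1 - q)⁻¹ * ((1 - dt q t e) ^ dl (dsrc src tgt e) (dtgt src tgt e))⁻¹
      * ((1 - dt q t e * q⁻¹) ^ dl (dsrc src tgt e) (dtgt src tgt e))⁻¹) •
  (Finsupp.sum (shift3 q t e a b c * pref1 src tgt q t e).coeff (fun m cf =>
      cf • (gen F I (dsrc src tgt e) (m 0) * gen F I (dsrc src tgt e) (m 1)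
        * gen F I (dtgt src tgt e) (m 2)))
    + Finsupp.sum (shift3 q t e a b c * pref2 src tgt q t e).coeff (fun m cf =>
      cf • (gen F I (dsrc src tgt e) (m 1) * gen F I (dtgt src tgt e) (m 2)
        * gen F I (dsrc src tgt e) (m 0)))
    + Finsupp.sum (shift3 q t e a b c * pref3 src tgt q t e).coeff (fun m cf =>
      cf • (gen F I (dtgt src tgt e) (m 2) * gen F I (dsrc src tgt e) (m 0)
        * gen F I (dsrc src tgt e) (m 1))))

/-- The relations defining the quantum loop group `U⁺ = Ũ⁺/J`: the quadratic relations
together with the vanishing of all the cubic elements. -/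
inductive FullRel (src tgt : E → I) (q : F) (t : E → F) :
    FreeAlgebra F (I × ℤ) → FreeAlgebra F (I × ℤ) → Prop
  | quad {x y : FreeAlgebra F (I × ℤ)} : QuadRel src tgt q t x y → FullRel src tgt q t x y
  | cubic (e : DEdge E) (a b c : ℤ) : FullRel src tgt q t (Afree src tgt q t e a b c) 0

/-- The quantum loop group `U⁺ = Ũ⁺ / J`. -/
abbrev Uplus (src tgt : E → I) (q : F) (t : E → F) : Type :=
  RingQuot (FullRel src tgt q t)

/-- `e_{i,d} ∈ U⁺` -/
def eUp (src tgt : E → I) (q : F) (t : E → F) (i : I) (d : ℤ) : Uplus src tgt q t :=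
  RingQuot.mkAlgHom F (FullRel src tgt q t) (gen F I i d)

/-- the canonical projection `Ũ⁺ → U⁺` -/
def projU (src tgt : E → I) (q : F) (t : E → F) :
    Utilde src tgt q t →ₐ[F] Uplus src tgt q t :=
  RingQuot.liftAlgHom F ⟨RingQuot.mkAlgHom F (FullRel src tgt q t),
    fun _ _ hxy => RingQuot.mkAlgHom_rel F (FullRel.quad hxy)⟩

/-- `J ⊆ Ũ⁺`: the two-sided ideal generated by the cubic elements, realized as the kernel
of the projection `Ũ⁺ → U⁺ = Ũ⁺/J`. -/
def Jset (src tgt : E → I) (q : F) (t : E → F) : Set (Utilde src tgt q t) :=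
  {u | projU src tgt q t u = 0}

/-! ## Leading words -/

def totalDeg {I : Type} [Fintype I] (ν : I → ℕ) : ℕ := ∑ i, ν i

/-- The word associated to the monomial `∏ z_v^{m v}` and the ordering `σ` of its
variables: the `a`-th letter is `(σ a).1` with exponent
`d_a = k_a + ∑_{t>a} #_{i_a → i_t} - ∑_{s<a} #_{i_s → i_a}` where `k_a = -m (σ a)`. -/
def assocWord (src tgt : E → I) {ν : I → ℕ} (m : VarType ν →₀ ℤ)
    (σ : Fin (totalDeg ν) ≃ VarType ν) : Word I :=
  List.ofFn fun a : Fin (totalDeg ν) =>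
    ((σ a).1,
      - m (σ a)
        + ∑ t' ∈ Finset.univ.filter (fun t' : Fin (totalDeg ν) => a < t'),
            (nE src tgt (σ a).1 (σ t').1 : ℤ)
        - ∑ s ∈ Finset.univ.filter (fun s : Fin (totalDeg ν) => s < a),
            (nE src tgt (σ s).1 (σ a).1 : ℤ))

/-- `w` is the leading word of the monomial `m`: the lexicographically largest among the
words associated to the orderings of its variables. -/
def IsLeadOfMono (src tgt : E → I) [LinearOrder I] {ν : I → ℕ} (m : VarType ν →₀ ℤ)
    (w : Word I) : Prop :=
  (∃ σ, w = assocWord src tgt m σ) ∧ ∀ σ, wordLE (assocWord src tgt m σ) w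

/-- `w` is the leading word of `0 ≠ R ∈ 𝒱`: the largest of the leading words of the
monomials appearing in `R`. -/
def IsLead (src tgt : E → I) [LinearOrder I] {ν : I → ℕ} (R : Laur F ν) (w : Word I) : Prop :=
  (∃ m ∈ R.coeff.support, IsLeadOfMono src tgt m w) ∧
    ∀ m ∈ R.coeff.support, ∀ σ, wordLE (assocWord src tgt m σ) w

end QShuffle

namespace QShuffle

/-- the exponents of the word associated to the `σ`-ordering of the monomial with colors `c`
and exponents `-k`: `d_a = k_{σ(a)} + ∑_{t>a} #_{i_a → i_t} - ∑_{s<a} #_{i_s → i_a}`. -/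
def assocExp {I E : Type} [Fintype I] [Fintype E] [DecidableEq I] [DecidableEq E]
    (src tgt : E → I) {n : ℕ} (c : Fin n → I) (k : Fin n → ℤ) (σ : Equiv.Perm (Fin n))
    (a : Fin n) : ℤ :=
  k (σ a)
    + ∑ t' ∈ Finset.univ.filter (fun t' : Fin n => a < t'), (nE src tgt (c (σ a)) (c (σ t')) : ℤ)
    - ∑ s ∈ Finset.univ.filter (fun s : Fin n => s < a), (nE src tgt (c (σ s)) (c (σ a)) : ℤ)

/-- the system of inequalities
`∑_{s ∈ A} d_s ≥ -M|A| + m|A|² - ∑_{A ∋ s > t ∉ A} #_{i_s i_t}` for all `A ⊆ {1,…,n}`,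
for the word associated to the `σ`-ordering. -/
def IneqSystem {I E : Type} [Fintype I] [Fintype E] [DecidableEq I] [DecidableEq E]
    (src tgt : E → I) {n : ℕ} (c : Fin n → I) (k : Fin n → ℤ) (M m : ℤ)
    (σ : Equiv.Perm (Fin n)) : Prop :=
  ∀ A : Finset (Fin n),
    ∑ s ∈ A, assocExp src tgt c k σ s ≥
      -M * A.card + m * (A.card : ℤ) ^ 2
        - ∑ p ∈ (A ×ˢ Aᶜ).filter (fun p : Fin n × Fin n => p.2 < p.1),
            (nnE src tgt (c (σ p.1)) (c (σ p.2)) : ℤ)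

end QShuffle

/-!
Fix an ordering `σ` and a set `A` of positions. Adding the crossing term to the left-hand side,
`∑_{s ∈ A} d_s + ∑_{A ∋ s > t ∉ A} #_{i_s i_t} = ∑_{x ∈ σ(A)} k_x + ∑_{x ∈ σ(A), y ∉ σ(A)} #_{x→y}`:
an edge between two variables of `σ(A)` enters the `d_s` once with each sign, and an edge leaving
`σ(A)` survives either in some `d_s` or in the crossing term. The right-hand side only depends on
the set of variables `σ(A)`, so for every ordering the system is equivalent to one and the same
system indexed by sets of variables.
-/

theorem Finset.sum_forward_sub_backward_add_crossing {α G : Type*} [Fintype α] [LinearOrder α]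
    [AddCommGroup G] (A : Finset α) (f : α → α → G) :
    ∑ s ∈ A, (∑ t ∈ univ.filter (fun t => s < t), f s t
        - ∑ t ∈ univ.filter (fun t => t < s), f t s)
      + ∑ p ∈ (A ×ˢ Aᶜ).filter (fun p : α × α => p.2 < p.1), (f p.1 p.2 + f p.2 p.1)
      = ∑ p ∈ A ×ˢ Aᶜ, f p.1 p.2 := by
  have sum_eq_sum_ite (B : Finset α) (g : α → G) :
      ∑ s ∈ B, g s = ∑ s, if s ∈ B then g s else 0 :=
    (sum_ite_mem_eq B g).symm
  simp only [sum_sub_distrib, sum_add_distrib, sum_filter, sum_product]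
  simp only [sum_eq_sum_ite A, sum_eq_sum_ite Aᶜ, mem_compl, ite_sum_zero]
  rw [sum_comm (f := fun s t => if s ∈ A then if t < s then f t s else 0 else 0),
    sum_comm (f := fun s t => if s ∈ A then if t ∉ A then if t < s then f t s else 0
      else 0 else 0)]
  simp only [← sum_add_distrib, ← sum_sub_distrib]
  refine sum_congr rfl fun s _ => sum_congr rfl fun t _ => ?_
  rcases lt_trichotomy s t with h | rfl | h
  · simp only [h, h.not_gt, if_true, if_false]; split_ifs <;> abel
  · simp +contextual
  · simp only [h, h.not_gt, if_true, if_false]; split_ifs <;> abel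

namespace QShuffle

theorem sum_assocExp_add_sum_crossing {I E : Type} [Fintype I] [Fintype E] [DecidableEq I]
    [DecidableEq E] (src tgt : E → I) {n : ℕ} (c : Fin n → I) (k : Fin n → ℤ)
    (σ : Equiv.Perm (Fin n)) (A : Finset (Fin n)) :
    ∑ s ∈ A, assocExp src tgt c k σ s
      + ∑ p ∈ (A ×ˢ Aᶜ).filter (fun p : Fin n × Fin n => p.2 < p.1),
          (nnE src tgt (c (σ p.1)) (c (σ p.2)) : ℤ)
    = ∑ x ∈ A.image σ, k x
      + ∑ p ∈ A.image σ ×ˢ (A.image σ)ᶜ, (nE src tgt (c p.1) (c p.2) : ℤ) := by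
  have hk : ∑ x ∈ A.image σ, k x = ∑ s ∈ A, k (σ s) := Finset.sum_image (by simp)
  have hcross : ∑ p ∈ A.image σ ×ˢ (A.image σ)ᶜ, (nE src tgt (c p.1) (c p.2) : ℤ)
      = ∑ p ∈ A ×ˢ Aᶜ, (nE src tgt (c (σ p.1)) (c (σ p.2)) : ℤ) :=
    (Finset.sum_equiv (σ.prodCongr σ) (by simp) (fun _ _ => rfl)).symm
  rw [hk, hcross, ← Finset.sum_forward_sub_backward_add_crossing A
    (fun s t => (nE src tgt (c (σ s)) (c (σ t)) : ℤ))]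
  simp only [assocExp, nnE, Nat.cast_add, Finset.sum_add_distrib, Finset.sum_sub_distrib]
  abel

def VarIneqSystem {I E : Type} [Fintype I] [Fintype E] [DecidableEq I] [DecidableEq E]
    (src tgt : E → I) {n : ℕ} (c : Fin n → I) (k : Fin n → ℤ) (M m : ℤ) : Prop :=
  ∀ X : Finset (Fin n),
    ∑ x ∈ X, k x + ∑ p ∈ X ×ˢ Xᶜ, (nE src tgt (c p.1) (c p.2) : ℤ) ≥
      -M * X.card + m * (X.card : ℤ) ^ 2

theorem ineqSystem_iff_varIneqSystem {I E : Type} [Fintype I] [Fintype E] [DecidableEq I]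
    [DecidableEq E] (src tgt : E → I) {n : ℕ} (c : Fin n → I) (k : Fin n → ℤ) (M m : ℤ)
    (σ : Equiv.Perm (Fin n)) :
    IneqSystem src tgt c k M m σ ↔ VarIneqSystem src tgt c k M m := by
  have hcard (A : Finset (Fin n)) : (A.image σ).card = A.card :=
    Finset.card_image_of_injective A σ.injective
  constructor
  · intro h X
    obtain ⟨A, rfl⟩ : ∃ A, A.image σ = X := ⟨X.image σ.symm, by simp [Finset.image_image]⟩
    have := h A
    rw [hcard, ← sum_assocExp_add_sum_crossing]
    linarith
  · intro h A
    have := h (A.image σ)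
    rw [hcard, ← sum_assocExp_add_sum_crossing] at this
    linarith

/-- The system of inequalities defining `T_{M,m}` holds for the word
associated to one ordering of a monomial if and only if it holds for the word associated to
every ordering of that monomial. -/
theorem statement12 {I E : Type} [Fintype I] [Fintype E] [DecidableEq I] [DecidableEq E]
    (src tgt : E → I) {n : ℕ} (c : Fin n → I) (k : Fin n → ℤ) (M m : ℤ)
    (σ τ : Equiv.Perm (Fin n)) (hσ : IneqSystem src tgt c k M m σ) :
    IneqSystem src tgt c k M m τ :=
  (ineqSystem_iff_varIneqSystem src tgt c k M m τ).2
    ((ineqSystem_iff_varIneqSystem src tgt c k M m σ).1 hσ)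

end QShuffle
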